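/- arXiv:1910.03013 — 3 statements merged into one kernel-verified Lean document; each statement's English description precedes it below -/
import Mathlib

section
/- Let N be an even positive integer with N ≥ 4, let X : ℕ → ℝ, and define J(τ) = 2 ∑_{u=0}^{N/2−1} X(u)(1 + cos(2πτu/N)) for integer τ. Then for every integer u with 1 ≤ u ≤ N/2 − 1, X(u) = Re( (1/N) ∑_{τ=1}^{N} J(τ) exp(i·2πτu/N) ), where i is the imaginary unit and the observations J(τ) are regarded as complex numbers. -/
/-!
Taking real parts, the right-hand side is `(1/N) ∑_τ J(τ) cos(2πτu/N)`. Everything then reduces to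
the discrete orthogonality `∑_{τ=1}^N cos(2πτk/N) = N·[N ∣ k]`, the real part of a geometric sum of
the `N`-th root of unity `e^{2πik/N}`. Writing `cos(2πτv/N) cos(2πτu/N)` as half the sum of the
cosines at frequencies `v + u` and `v - u`, and using `0 < u`, `u + v < N` for every `v` in the band,
only the term `v = u` survives, with weight `N/2`; the constant term `1` of `J` contributes nothing.
-/

open Real Complex Finset

theorem Finset.sum_Icc_one_int_eq_sum_range {M : Type*} [AddCommMonoid M] (f : ℤ → M) (N : ℕ) :
    ∑ τ ∈ Icc (1 : ℤ) N, f τ = ∑ t ∈ range N, f (t + 1) := by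
  rw [Int.Icc_eq_finset_map, sum_map]
  simp [add_comm]

theorem Complex.sum_Icc_exp_two_pi_I_mul_div (N : ℕ) (hN : N ≠ 0) (k : ℤ) :
    ∑ τ ∈ Icc (1 : ℤ) N, exp (2 * π * I * τ * k / N) = if (N : ℤ) ∣ k then N else 0 := by
  set z := exp (2 * π * I * k / N)
  have hNC : (N : ℂ) ≠ 0 := Nat.cast_ne_zero.mpr hN
  have hpow (t : ℕ) : exp (2 * π * I * ((t + 1 : ℤ) : ℂ) * k / N) = z * z ^ t := by
    rw [← pow_succ', ← exp_nat_mul]; push_cast; ring_nf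
  rw [sum_Icc_one_int_eq_sum_range, sum_congr rfl fun t _ => hpow t, ← mul_sum]
  have hz_one : z = 1 ↔ (N : ℤ) ∣ k := by
    rw [exp_eq_one_iff]
    constructor
    · rintro ⟨n, hn⟩
      refine ⟨n, ?_⟩
      field_simp at hn
      exact_mod_cast hn
    · rintro ⟨n, rfl⟩
      exact ⟨n, by push_cast; field_simp⟩
  split_ifs with hk
  · simp [hz_one.mpr hk]
  · have hzN : z ^ N = 1 := by
      rw [← exp_nat_mul, exp_eq_one_iff]; exact ⟨k, by field_simp⟩
    rw [geom_sum_eq (mt hz_one.mp hk), hzN]; simp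

theorem Real.sum_Icc_cos_two_pi_mul_div (N : ℕ) (hN : N ≠ 0) (k : ℤ) :
    ∑ τ ∈ Icc (1 : ℤ) N, cos (2 * π * τ * k / N) = if (N : ℤ) ∣ k then (N : ℝ) else 0 := by
  have h := congrArg Complex.re (Complex.sum_Icc_exp_two_pi_I_mul_div N hN k)
  rw [re_sum] at h
  convert h using 1
  · refine sum_congr rfl fun τ _ => ?_
    rw [← exp_ofReal_mul_I_re]; push_cast; ring_nf
  · split_ifs <;> simp

theorem Real.sum_Icc_cos_two_pi_mul_div_eq_zero {N u : ℕ} (hu : 0 < u) (huN : u < N) :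
    ∑ τ ∈ Icc (1 : ℤ) N, cos (2 * π * τ * u / N) = 0 := by
  have hndvd : ¬ (N : ℤ) ∣ u := fun h => by
    have := Int.le_of_dvd (by omega) h
    omega
  simpa [hndvd] using Real.sum_Icc_cos_two_pi_mul_div N (by omega) u

theorem Real.sum_Icc_cos_mul_cos_two_pi_mul_div {N u v : ℕ} (hu : 0 < u) (huv : u + v < N) :
    ∑ τ ∈ Icc (1 : ℤ) N, cos (2 * π * τ * v / N) * cos (2 * π * τ * u / N) =
      if v = u then (N / 2 : ℝ) else 0 := by
  have hprod (τ : ℤ) : cos (2 * π * τ * v / N) * cos (2 * π * τ * u / N) =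
      (cos (2 * π * τ * ((v + u : ℕ) : ℤ) / N) + cos (2 * π * τ * ((v - u : ℤ) : ℝ) / N)) / 2 := by
    have hadd := cos_add (2 * π * τ * v / N) (2 * π * τ * u / N)
    have hsub := cos_sub (2 * π * τ * v / N) (2 * π * τ * u / N)
    push_cast
    rw [show 2 * π * τ * (v + u) / N = 2 * π * τ * v / N + 2 * π * τ * u / N by ring,
      show 2 * π * τ * (v - u) / N = 2 * π * τ * v / N - 2 * π * τ * u / N by ring]
    linarith
  have hsum : ¬ (N : ℤ) ∣ ((v + u : ℕ) : ℤ) := fun h => by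
    have := Int.le_of_dvd (by omega) h
    omega
  have hdiff : (N : ℤ) ∣ (v : ℤ) - u ↔ v = u := by
    constructor
    · intro h
      by_contra hne
      have := Int.le_of_dvd (abs_pos.mpr (sub_ne_zero.mpr (by omega))) ((dvd_abs _ _).mpr h)
      rw [le_abs] at this
      omega
    · rintro rfl; simp
  rw [sum_congr rfl fun τ _ => hprod τ, ← sum_div, sum_add_distrib,
    Real.sum_Icc_cos_two_pi_mul_div N (by omega), Real.sum_Icc_cos_two_pi_mul_div N (by omega),
    if_neg hsum]
  simp only [hdiff]
  split_ifs <;> simp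

theorem Complex.re_sum_ofReal_mul_exp_I_mul {ι : Type*} (s : Finset ι) (f g : ι → ℝ) :
    (∑ i ∈ s, (f i : ℂ) * exp (I * (g i : ℂ))).re = ∑ i ∈ s, f i * Real.cos (g i) := by
  simp_rw [re_sum, re_ofReal_mul, mul_comm I, exp_ofReal_mul_I_re]

theorem Real.sum_Icc_low_band_mul_cos_two_pi_mul_div (N : ℕ) (X : ℕ → ℝ) {u : ℕ} (hu1 : 1 ≤ u)
    (hu2 : u ≤ N / 2 - 1) :
    ∑ τ ∈ Icc (1 : ℤ) N,
        (2 * ∑ v ∈ range (N / 2), X v * (1 + cos (2 * π * τ * v / N))) * cos (2 * π * τ * u / N) =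
      N * X u :=
  calc _ = ∑ v ∈ range (N / 2), 2 * X v * (∑ τ ∈ Icc (1 : ℤ) N, cos (2 * π * τ * u / N) +
          ∑ τ ∈ Icc (1 : ℤ) N, cos (2 * π * τ * v / N) * cos (2 * π * τ * u / N)) := by
        simp_rw [mul_sum, sum_mul]
        rw [sum_comm]
        refine sum_congr rfl fun v _ => ?_
        rw [← sum_add_distrib, mul_sum]
        exact sum_congr rfl fun τ _ => by ring
    _ = ∑ v ∈ range (N / 2), 2 * X v * if v = u then (N / 2 : ℝ) else 0 := by
        refine sum_congr rfl fun v hv => ?_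
        rw [mem_range] at hv
        rw [sum_Icc_cos_two_pi_mul_div_eq_zero (by omega) (by omega),
          sum_Icc_cos_mul_cos_two_pi_mul_div (by omega) (by omega), zero_add]
    _ = N * X u := by
        simp_rw [mul_ite, mul_zero]
        rw [sum_ite_eq' _ u, if_pos (mem_range.mpr (by omega))]
        ring

theorem stmt3_general (N : ℕ)
    (X : ℕ → ℝ) (J : ℤ → ℝ)
    (hJ : ∀ τ : ℤ, J τ = 2 * ∑ u ∈ Finset.range (N / 2), X u * (1 + Real.cos (2 * Real.pi * (τ : ℝ) * (u : ℝ) / (N : ℝ))))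
    (u : ℕ) (hu1 : 1 ≤ u) (hu2 : u ≤ N / 2 - 1) :
    X u = ((1 / (N : ℂ)) * ∑ τ ∈ Finset.Icc (1 : ℤ) (N : ℤ),
      (J τ : ℂ) * Complex.exp (Complex.I * ((2 * Real.pi * (τ : ℝ) * (u : ℝ) / (N : ℝ) : ℝ) : ℂ))).re := by
  have hN : (N : ℝ) ≠ 0 := Nat.cast_ne_zero.mpr (by omega)
  rw [← ofReal_natCast, ← ofReal_one, ← ofReal_div, re_ofReal_mul, re_sum_ofReal_mul_exp_I_mul]
  simp_rw [hJ]
  rw [Real.sum_Icc_low_band_mul_cos_two_pi_mul_div N X hu1 hu2]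
  field_simp

theorem stmt3 (N : ℕ) (hNeven : Even N) (hN : 4 ≤ N)
    (X : ℕ → ℝ) (J : ℤ → ℝ)
    (hJ : ∀ τ : ℤ, J τ = 2 * ∑ u ∈ Finset.range (N / 2), X u * (1 + Real.cos (2 * Real.pi * (τ : ℝ) * (u : ℝ) / (N : ℝ))))
    (u : ℕ) (hu1 : 1 ≤ u) (hu2 : u ≤ N / 2 - 1) :
    X u = ((1 / (N : ℂ)) * ∑ τ ∈ Finset.Icc (1 : ℤ) (N : ℤ),
      (J τ : ℂ) * Complex.exp (Complex.I * ((2 * Real.pi * (τ : ℝ) * (u : ℝ) / (N : ℝ) : ℝ) : ℂ))).re :=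
  stmt3_general N X J hJ u hu1 hu2
end

section
/- Let N be an even positive integer with N ≥ 4, let R be a real number, let A : ℕ → ℂ, and define J(τ) = ∑_{u=0}^{N/2−1} |A(u) + R·exp(i·2πτu/N)|² for integer τ. Then |A(0) + R|² = (1/N) ∑_{τ=1}^{N} J(τ) − ∑_{u₁=1}^{N/2−1} |A(u₁)|² − (N/2 − 1)·R². -/
open Real Complex Finset

/-! For `1 ≤ u < N` the phases `exp (2πiτu/N)`, `τ = 1, …, N`, run through the powers of the
nontrivial `N`-th root of unity `exp (2πiu/N)` and so sum to zero. Summing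
`|A u + R e^{iθ}|² = |A u|² + R² + 2 Re ⟪A u, R e^{iθ}⟫` over `τ` therefore kills the cross
term and leaves `N (|A u|² + R²)`, while for `u = 0` the phase is `1` and every term is `|A 0 + R|²`.
Summing over `u` and dividing by `N` gives the identity. -/

theorem sum_Icc_one_eq_sum_range {M : Type*} [AddCommMonoid M] (N : ℕ) (f : ℤ → M) :
    ∑ τ ∈ Icc (1 : ℤ) N, f τ = ∑ k ∈ range N, f (k + 1) :=
  (sum_nbij' (fun k : ℕ => (k : ℤ) + 1) (fun τ => (τ - 1).toNat)
    (by intro k; simp) (fun τ hτ => by rw [mem_Icc] at hτ; rw [mem_range]; omega)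
    (by intro k _; simp)
    (fun τ hτ => by rw [mem_Icc] at hτ; omega) (fun _ _ => rfl)).symm

theorem geom_sum_eq_zero_of_pow_eq_one {K : Type*} [Field K] {z : K} {N : ℕ} (hz : z ≠ 1)
    (hzN : z ^ N = 1) : ∑ k ∈ range N, z ^ k = 0 := by
  rw [geom_sum_eq hz, hzN, sub_self, zero_div]

theorem sum_norm_add_sq_of_sum_eq_zero {ι E : Type*} [NormedAddCommGroup E]
    [InnerProductSpace ℝ E] (s : Finset ι) (a : E) (v : ι → E) (hv : ∑ i ∈ s, v i = 0) :
    ∑ i ∈ s, ‖a + v i‖ ^ 2 = #s * ‖a‖ ^ 2 + ∑ i ∈ s, ‖v i‖ ^ 2 := by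
  simp_rw [norm_add_sq_real, sum_add_distrib, ← mul_sum, ← inner_sum, hv, inner_zero_right]
  simp

theorem exp_two_pi_mul_div_eq_pow (N u τ : ℕ) :
    exp (I * ↑(2 * π * τ * u / N)) = exp (2 * π * I / N) ^ (u * τ) := by
  rw [← Complex.exp_nat_mul]; push_cast; ring_nf

theorem sum_Icc_exp_two_pi_mul_div_eq_zero {N u : ℕ} (hu : 0 < u) (huN : u < N) :
    ∑ τ ∈ Icc (1 : ℤ) N, exp (I * ↑(2 * π * τ * u / N)) = 0 := by
  set ζ := exp (2 * π * I / N)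
  have hζ : IsPrimitiveRoot ζ N := isPrimitiveRoot_exp N (by omega)
  have hpow (k : ℕ) :
      exp (I * ↑(2 * π * ((k + 1 : ℤ) : ℝ) * u / N)) = (ζ ^ u) ^ k * ζ ^ u := by
    rw [← pow_succ, ← pow_mul, ← exp_two_pi_mul_div_eq_pow]
    push_cast; rfl
  rw [sum_Icc_one_eq_sum_range]
  simp_rw [hpow, ← sum_mul]
  rw [geom_sum_eq_zero_of_pow_eq_one, zero_mul]
  · rw [Ne, hζ.pow_eq_one_iff_dvd]; exact Nat.not_dvd_of_pos_of_lt hu huN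
  · rw [← pow_mul, mul_comm, pow_mul, hζ.pow_eq_one, one_pow]

theorem sum_Icc_norm_add_mul_exp_sq {N u : ℕ} (hu : 0 < u) (huN : u < N) (a : ℂ) (R : ℝ) :
    ∑ τ ∈ Icc (1 : ℤ) N, ‖a + R * exp (I * ↑(2 * π * τ * u / N))‖ ^ 2 =
      N * (‖a‖ ^ 2 + R ^ 2) := by
  rw [sum_norm_add_sq_of_sum_eq_zero _ a _
    (by rw [← mul_sum, sum_Icc_exp_two_pi_mul_div_eq_zero hu huN, mul_zero])]
  simp only [norm_mul, Complex.norm_real, norm_exp_I_mul_ofReal, mul_one, Real.norm_eq_abs, sq_abs,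
    sum_const, Int.card_Icc, add_sub_cancel_right, Int.toNat_natCast, nsmul_eq_mul]
  ring

theorem stmt14 (N : ℕ) (hNeven : Even N) (hN : 4 ≤ N)
    (R : ℝ) (A : ℕ → ℂ) (J : ℤ → ℝ)
    (hJ : ∀ τ : ℤ, J τ = ∑ u ∈ Finset.range (N / 2), (Norm.norm (A u + (R : ℂ) * Complex.exp (Complex.I * ((2 * Real.pi * (τ : ℝ) * (u : ℝ) / (N : ℝ) : ℝ) : ℂ)))) ^ 2) :
    (Norm.norm (A 0 + (R : ℂ))) ^ 2 = (1 / (N : ℝ)) * ∑ τ ∈ Finset.Icc (1 : ℤ) (N : ℤ), J τ - ∑ u₁ ∈ Finset.Icc 1 (N / 2 - 1), (Norm.norm (A u₁)) ^ 2 - ((N : ℝ) / 2 - 1) * R ^ 2 := by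
  have hrange : range (N / 2) = insert 0 (Icc 1 (N / 2 - 1)) := by
    ext u; simp only [mem_range, mem_insert, mem_Icc]; omega
  have hzero :
      ∑ τ ∈ Icc (1 : ℤ) N, ‖A 0 + R * exp (I * ↑(2 * π * τ * ((0 : ℕ) : ℝ) / N))‖ ^ 2 =
      N * ‖A 0 + R‖ ^ 2 := by
    simp
  have hpos : ∀ u ∈ Icc 1 (N / 2 - 1), ∑ τ ∈ Icc (1 : ℤ) N,
      ‖A u + R * exp (I * ↑(2 * π * τ * u / N))‖ ^ 2 = N * (‖A u‖ ^ 2 + R ^ 2) :=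
    fun u hu => by rw [mem_Icc] at hu; exact sum_Icc_norm_add_mul_exp_sq (by omega) (by omega) _ _
  have hhalf : ((N / 2 - 1 : ℕ) : ℝ) = N / 2 - 1 := by
    obtain ⟨m, rfl⟩ := hNeven
    rw [Nat.cast_sub (by omega), ← two_mul, Nat.mul_div_cancel_left _ two_pos]
    push_cast; ring
  rw [sum_congr rfl fun τ _ => hJ τ, sum_comm, hrange, sum_insert (by simp), hzero,
    sum_congr rfl hpos, ← mul_sum, sum_add_distrib, sum_const, Nat.card_Icc, nsmul_eq_mul,
    Nat.add_sub_cancel, hhalf]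
  field_simp
  ring
end

section
/- Let N be an even positive integer with N ≥ 4, let R be a real number, let A : ℕ → ℂ, and define J(τ) = ∑_{u=0}^{N/2−1} |A(u) + R·exp(i·2πτu/N)|² for integer τ (including negative τ). Then for every integer u with 1 ≤ u ≤ N/2 − 1, R·A(u) = (1/N) ∑_{τ=−N/2}^{N/2−1} J(τ) exp(i·2πτu/N). -/
/-!
Write `e(x) = exp(2πi x / N)`, the standard additive character of `ZMod N`. Each intensity
expands as `|A v + R e(τv)|² = |A v|² + R² + R A(v) e(-τv) + R conj(A v) e(τv)`. Because `N` is
even, `τ` runs over a complete residue system mod `N`, so after multiplying by `e(τu)` and summing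
over `τ`, orthogonality keeps only the terms with `u ≡ 0`, `u ≡ v` or `u ≡ -v (mod N)`. For
`1 ≤ u < N/2` and `0 ≤ v < N/2` only `v = u` survives, which leaves `N R A(u)`.
-/

open Real Complex Finset

open scoped ComplexConjugate

theorem Complex.ofReal_norm_add_ofReal_mul_sq {z : ℂ} (hz : ‖z‖ = 1) (a : ℂ) (r : ℝ) :
    ((‖a + r * z‖ ^ 2 : ℝ) : ℂ) = ‖a‖ ^ 2 + r ^ 2 + r * a * conj z + r * conj a * z := by
  have hzz : z * conj z = 1 := by rw [mul_conj', hz]; simp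
  push_cast
  rw [← mul_conj', ← mul_conj', map_add, map_mul, conj_ofReal]
  linear_combination r ^ 2 * hzz

theorem Int.Icc_neg_half_eq_Ico {N : ℕ} (hN : Even N) :
    Icc (-((N : ℤ) / 2)) ((N : ℤ) / 2 - 1) = Ico (-((N : ℤ) / 2)) (-((N : ℤ) / 2) + N) := by
  obtain ⟨m, rfl⟩ := hN
  ext τ
  simp only [mem_Icc, mem_Ico]
  omega

namespace ZMod

theorem natCast_eq_natCast_iff_of_lt {N a b : ℕ} (ha : a < N) (hb : b < N) :
    (a : ZMod N) = b ↔ a = b := by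
  rw [natCast_eq_natCast_iff', Nat.mod_eq_of_lt ha, Nat.mod_eq_of_lt hb]

theorem sum_Ico_intCast {M : Type*} [AddCommMonoid M] (N : ℕ) [NeZero N] (a : ℤ)
    (f : ZMod N → M) : ∑ τ ∈ Ico a (a + N), f τ = ∑ x : ZMod N, f x := by
  have hinj : Set.InjOn (fun τ : ℤ => (τ : ZMod N)) (Ico a (a + N)) := by
    intro τ hτ σ hσ h
    simp only [coe_Ico, Set.mem_Ico] at hτ hσ
    have := Int.eq_zero_of_abs_lt_dvd ((intCast_eq_intCast_iff_dvd_sub _ _ _).1 h)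
      (abs_lt.2 ⟨by omega, by omega⟩)
    omega
  have himage : (Ico a (a + N)).image (fun τ : ℤ => (τ : ZMod N)) = univ := by
    apply eq_univ_of_card
    rw [card_image_of_injOn hinj, Int.card_Ico, ZMod.card]
    simp
  rw [← sum_image hinj, himage]

variable {N : ℕ} [NeZero N]

theorem sum_Icc_neg_half_stdAddChar_mul (hN : Even N) (k : ZMod N) :
    ∑ τ ∈ Icc (-((N : ℤ) / 2)) ((N : ℤ) / 2 - 1), stdAddChar ((τ : ZMod N) * k)
      = if k = 0 then (N : ℂ) else 0 := by
  rw [Int.Icc_neg_half_eq_Ico hN, sum_Ico_intCast N _ (fun x => stdAddChar (x * k)),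
    AddChar.sum_mulShift k (isPrimitive_stdAddChar N), ZMod.card]
  push_cast
  rfl

theorem exp_eq_stdAddChar (τ : ℤ) (u : ℕ) :
    exp (I * ((2 * π * τ * u / N : ℝ) : ℂ)) = stdAddChar ((τ : ZMod N) * (u : ZMod N)) := by
  have h := stdAddChar_coe (N := N) (τ * u)
  push_cast at h
  rw [h]
  congr 1
  push_cast
  ring

theorem norm_stdAddChar (x : ZMod N) : ‖stdAddChar x‖ = 1 :=
  Circle.norm_coe _

theorem conj_stdAddChar (x : ZMod N) : conj (stdAddChar x) = stdAddChar (-x) := by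
  rw [AddChar.map_neg_eq_inv, Complex.inv_eq_conj (norm_stdAddChar x)]

theorem ofReal_norm_add_mul_stdAddChar_sq_mul (a : ℂ) (r : ℝ) (x y : ZMod N) :
    ((‖a + r * stdAddChar x‖ ^ 2 : ℝ) : ℂ) * stdAddChar y
      = (‖a‖ ^ 2 + r ^ 2) * stdAddChar y + r * a * stdAddChar (y - x)
        + r * conj a * stdAddChar (y + x) := by
  rw [ofReal_norm_add_ofReal_mul_sq (norm_stdAddChar x), conj_stdAddChar, sub_eq_add_neg,
    AddChar.map_add_eq_mul, AddChar.map_add_eq_mul]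
  ring

theorem sum_hologram_mul_stdAddChar (hN : Even N) (R : ℝ) (A : ℕ → ℂ) (M : ℕ) (k : ZMod N) :
    ∑ τ ∈ Icc (-((N : ℤ) / 2)) ((N : ℤ) / 2 - 1),
        ((∑ v ∈ range M, ‖A v + R * stdAddChar ((τ : ZMod N) * (v : ZMod N))‖ ^ 2 : ℝ) : ℂ)
          * stdAddChar ((τ : ZMod N) * k)
      = ∑ v ∈ range M, ((‖A v‖ ^ 2 + R ^ 2) * (if k = 0 then (N : ℂ) else 0)
          + R * A v * (if k - (v : ZMod N) = 0 then (N : ℂ) else 0)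
          + R * conj (A v) * (if k + (v : ZMod N) = 0 then (N : ℂ) else 0)) := by
  simp_rw [← sum_Icc_neg_half_stdAddChar_mul hN, mul_sum, ← sum_add_distrib]
  rw [sum_comm]
  refine sum_congr rfl fun τ _ => ?_
  rw [ofReal_sum, sum_mul]
  refine sum_congr rfl fun v _ => ?_
  rw [ofReal_norm_add_mul_stdAddChar_sq_mul, mul_sub, mul_add]

end ZMod

theorem stmt18_general (N : ℕ) (hNeven : Even N)
    (R : ℝ) (A : ℕ → ℂ) (J : ℤ → ℝ)
    (hJ : ∀ τ : ℤ, J τ = ∑ u ∈ Finset.range (N / 2), ‖A u + (R : ℂ) * Complex.exp (Complex.I * ((2 * Real.pi * (τ : ℝ) * (u : ℝ) / (N : ℝ) : ℝ) : ℂ))‖ ^ 2)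
    (u : ℕ) (hu1 : 1 ≤ u) (hu2 : u ≤ N / 2 - 1) :
    (R : ℂ) * A u = (1 / (N : ℂ)) * ∑ τ ∈ Finset.Icc (-((N : ℤ) / 2)) ((N : ℤ) / 2 - 1),
      (J τ : ℂ) * Complex.exp (Complex.I * ((2 * Real.pi * (τ : ℝ) * (u : ℝ) / (N : ℝ) : ℝ) : ℂ)) := by
  have : NeZero N := ⟨by omega⟩
  have hN : (N : ℂ) ≠ 0 := Nat.cast_ne_zero.2 (by omega)
  have hu : (u : ZMod N) ≠ 0 := by
    rw [Ne, ← Nat.cast_zero, ZMod.natCast_eq_natCast_iff_of_lt (by omega) (by omega)]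
    omega
  have hsub : ∀ v ∈ range (N / 2), (u : ZMod N) - v = 0 ↔ v = u := fun v hv => by
    rw [mem_range] at hv
    rw [sub_eq_zero, ZMod.natCast_eq_natCast_iff_of_lt (by omega) (by omega), eq_comm]
  have hadd : ∀ v ∈ range (N / 2), (u : ZMod N) + v ≠ 0 := fun v hv => by
    rw [mem_range] at hv
    rw [Ne, ← Nat.cast_add, ← Nat.cast_zero,
      ZMod.natCast_eq_natCast_iff_of_lt (by omega) (by omega)]
    omega
  simp_rw [hJ, ZMod.exp_eq_stdAddChar]
  rw [ZMod.sum_hologram_mul_stdAddChar hNeven]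
  simp +contextual only [hu, hsub, hadd]
  simp [show u < N / 2 by omega]
  field_simp

theorem stmt18 (N : ℕ) (hNeven : Even N) (hN : 4 ≤ N)
    (R : ℝ) (A : ℕ → ℂ) (J : ℤ → ℝ)
    (hJ : ∀ τ : ℤ, J τ = ∑ u ∈ Finset.range (N / 2), ‖A u + (R : ℂ) * Complex.exp (Complex.I * ((2 * Real.pi * (τ : ℝ) * (u : ℝ) / (N : ℝ) : ℝ) : ℂ))‖ ^ 2)
    (u : ℕ) (hu1 : 1 ≤ u) (hu2 : u ≤ N / 2 - 1) :
    (R : ℂ) * A u = (1 / (N : ℂ)) * ∑ τ ∈ Finset.Icc (-((N : ℤ) / 2)) ((N : ℤ) / 2 - 1),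
      (J τ : ℂ) * Complex.exp (Complex.I * ((2 * Real.pi * (τ : ℝ) * (u : ℝ) / (N : ℝ) : ℝ) : ℂ)) :=
  stmt18_general N hNeven R A J hJ u hu1 hu2
end
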